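/- For all v, v′ ∈ ℝ, |Υ(v) − Υ(v′)| ≤ γ·|v − v′|; that is, Υ is a γ-contraction on ℝ. -/

import Mathlib

/-! Changing the terminal value `v` by `δ` changes the reset option `v + E[s]` by exactly `δ`, and
the continuation option only through `γ · V(·, t+1, v)`. Since `min` and expectation are
`1`-Lipschitz for the sup-distance, backward induction from `t = k` shows that every `V(x, t, ·)` is
`1`-Lipschitz, and the factor `γ` in front of `V(·, 1, v)` makes `Υ` a `γ`-contraction. -/

open Finset

theorem Finset.inf'_sub_inf'_le {ι α : Type*} [AddCommGroup α] [LinearOrder α]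
    [IsOrderedAddMonoid α] {s : Finset ι} (H : s.Nonempty) {f f' : ι → α} {c : α}
    (hc : ∀ i ∈ s, f i - f' i ≤ c) : s.inf' H f - s.inf' H f' ≤ c := by
  refine sub_le_comm.mp (le_inf' H _ fun i hi => ?_)
  calc s.inf' H f - c ≤ f i - c := by gcongr; exact inf'_le f hi
    _ ≤ f' i := sub_le_comm.mp (hc i hi)

theorem Finset.abs_inf'_sub_inf'_le {ι α : Type*} [AddCommGroup α] [LinearOrder α]
    [IsOrderedAddMonoid α] {s : Finset ι} (H : s.Nonempty) {f f' : ι → α} {c : α}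
    (hc : ∀ i ∈ s, |f i - f' i| ≤ c) : |s.inf' H f - s.inf' H f'| ≤ c :=
  abs_sub_le_iff.mpr
    ⟨inf'_sub_inf'_le H fun i hi => (le_abs_self _).trans (hc i hi),
      inf'_sub_inf'_le H fun i hi => (le_abs_self _).trans (abs_sub_comm (f i) _ ▸ hc i hi)⟩

section WeightedSum

variable {W : Type*} [Fintype W] {p : W → ℝ}

theorem abs_sum_mul_sub_sum_mul_le (hp : ∀ w, 0 ≤ p w) (hp1 : ∑ w, p w = 1) {φ ψ : W → ℝ} {c : ℝ}
    (hc : ∀ w, |φ w - ψ w| ≤ c) : |∑ w, p w * φ w - ∑ w, p w * ψ w| ≤ c :=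
  calc |∑ w, p w * φ w - ∑ w, p w * ψ w| = |∑ w, p w * (φ w - ψ w)| := by
        simp only [mul_sub, sum_sub_distrib]
    _ ≤ ∑ w, |p w * (φ w - ψ w)| := abs_sum_le_sum_abs _ _
    _ ≤ ∑ w, p w * c := by
        gcongr with w
        rw [abs_mul, abs_of_nonneg (hp w)]
        exact mul_le_mul_of_nonneg_left (hc w) (hp w)
    _ = c := by rw [← sum_mul, hp1, one_mul]

theorem abs_sum_mul_add_mul_sub_le (hp : ∀ w, 0 ≤ p w) (hp1 : ∑ w, p w = 1) {γ δ : ℝ}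
    (hγ : 0 ≤ γ) (g : W → ℝ) {φ ψ : W → ℝ} (hδ : ∀ w, |φ w - ψ w| ≤ δ) :
    |∑ w, p w * (g w + γ * φ w) - ∑ w, p w * (g w + γ * ψ w)| ≤ γ * δ :=
  abs_sum_mul_sub_sum_mul_le hp hp1 fun w => by
    rw [add_sub_add_left_eq_sub, ← mul_sub, abs_mul, abs_of_nonneg hγ]
    exact mul_le_mul_of_nonneg_left (hδ w) hγ

end WeightedSum

theorem abs_value_sub_le_of_backward_recursion
    {W X U : Type*} [Fintype W] [Fintype U] [Nonempty U] {p : W → ℝ}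
    (hp : ∀ w, 0 ≤ p w) (hp1 : ∑ w, p w = 1) {k : ℕ} {γ : ℝ} (hγ0 : 0 ≤ γ) (hγ1 : γ ≤ 1)
    {h : X → ℕ → U → W → X} {g : X → ℕ → U → W → ℝ} {s : X → ℕ → W → ℝ}
    {V : X → ℕ → ℝ → ℝ}
    (hVk : ∀ x v, V x k v = v + ∑ w, p w * s x k w)
    (hVt : ∀ x t v, t < k →
      V x t v = min (v + ∑ w, p w * s x t w)
        (Finset.univ.inf' Finset.univ_nonempty
          (fun u : U => ∑ w, p w * (g x t u w + γ * V (h x t u w) (t + 1) v))))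
    (v v' : ℝ) {t : ℕ} (ht : t ≤ k) (x : X) : |V x t v - V x t v'| ≤ |v - v'| := by
  induction ht using Nat.decreasingInduction generalizing x with
  | self => rw [hVk, hVk, add_sub_add_right_eq_sub]
  | of_succ t ht ih =>
    rw [hVt x t v ht, hVt x t v' ht]
    refine (abs_min_sub_min_le_max _ _ _ _).trans (max_le ?_ ?_)
    · rw [add_sub_add_right_eq_sub]
    · refine abs_inf'_sub_inf'_le _ fun u _ => ?_
      calc _ ≤ γ * |v - v'| := abs_sum_mul_add_mul_sub_le hp hp1 hγ0 _ fun w => ih _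
        _ ≤ |v - v'| := mul_le_of_le_one_left (abs_nonneg _) hγ1

theorem upsilon_contraction_general
    {W : Type*} [Fintype W] (p : W → ℝ)
    (hp : ∀ w, 0 ≤ p w) (hp1 : ∑ w, p w = 1)
    {X : Type*} (ζ : X)
    {U : Type*} [Fintype U] [Nonempty U]
    (k : ℕ) (hk : 1 ≤ k)
    (γ : ℝ) (hγ0 : 0 ≤ γ) (hγ1 : γ < 1)
    (h : X → ℕ → U → W → X)
    (g : X → ℕ → U → W → ℝ)
    (s : X → ℕ → W → ℝ)
    (V : X → ℕ → ℝ → ℝ)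
    (hVk : ∀ x v, V x k v = v + ∑ w, p w * s x k w)
    (hVt : ∀ x t v, t < k →
      V x t v = min (v + ∑ w, p w * s x t w)
        (Finset.univ.inf' Finset.univ_nonempty
          (fun u : U => ∑ w, p w * (g x t u w + γ * V (h x t u w) (t + 1) v))))
    (Υ : ℝ → ℝ)
    (hΥ : ∀ v, Υ v = Finset.univ.inf' Finset.univ_nonempty
      (fun u : U => ∑ w, p w * (g ζ 0 u w + γ * V (h ζ 0 u w) 1 v)))
     :
    ∀ v v' : ℝ, |Υ v - Υ v'| ≤ γ * |v - v'| := by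
  intro v v'
  rw [hΥ, hΥ]
  exact abs_inf'_sub_inf'_le _ fun u _ => abs_sum_mul_add_mul_sub_le hp hp1 hγ0 _ fun w =>
    abs_value_sub_le_of_backward_recursion hp hp1 hγ0 hγ1.le hVk hVt v v' hk _

/-- **`Υ` is a `γ`-contraction:** `|Υ(v) − Υ(v′)| ≤ γ·|v − v′|` for all `v, v′ ∈ ℝ`. -/
theorem upsilon_contraction
    {W : Type*} [Fintype W] [Nonempty W] (p : W → ℝ)
    (hp : ∀ w, 0 ≤ p w) (hp1 : ∑ w, p w = 1)
    {X : Type*} (ζ : X)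
    {U : Type*} [Fintype U] [Nonempty U]
    (k : ℕ) (hk : 1 ≤ k)
    (γ : ℝ) (hγ0 : 0 ≤ γ) (hγ1 : γ < 1)
    (h : X → ℕ → U → W → X)
    (g : X → ℕ → U → W → ℝ) (hg : ∀ x t u w, 0 ≤ g x t u w)
    (s : X → ℕ → W → ℝ) (hs : ∀ x t w, 0 ≤ s x t w)
    (hsζ : ∀ t w, s ζ t w = 0)
    (V : X → ℕ → ℝ → ℝ)
    (hVk : ∀ x v, V x k v = v + ∑ w, p w * s x k w)
    (hVt : ∀ x t v, t < k →
      V x t v = min (v + ∑ w, p w * s x t w)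
        (Finset.univ.inf' Finset.univ_nonempty
          (fun u : U => ∑ w, p w * (g x t u w + γ * V (h x t u w) (t + 1) v))))
    (Υ : ℝ → ℝ)
    (hΥ : ∀ v, Υ v = Finset.univ.inf' Finset.univ_nonempty
      (fun u : U => ∑ w, p w * (g ζ 0 u w + γ * V (h ζ 0 u w) 1 v)))
     :
    ∀ v v' : ℝ, |Υ v - Υ v'| ≤ γ * |v - v'| :=
  upsilon_contraction_general p hp hp1 ζ k hk γ hγ0 hγ1 h g s V hVk hVt Υ hΥ
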